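/- arXiv:0803.0118 — 2 statements merged into one kernel-verified Lean document; each statement's English description precedes it below -/
import Mathlib

section
/- Let G be a finite 2-group with center C such that G/C is isomorphic to C₂ × C₂ and the commutator subgroup G' = ⟨e⟩ has order two. Then the map ⊙ : G → G defined by g⊙ = g if g ∈ C and g⊙ = ge if g ∉ C is an anti-automorphism of G of order two (i.e. (gh)⊙ = h⊙g⊙ for all g, h ∈ G, and ⊙ ∘ ⊙ is the identity). -/
/-- The group algebra of `G` over the field `ℤ₂` with two elements. -/
abbrev R2 (G : Type*) [Group G] := MonoidAlgebra (ZMod 2) G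

/-- The image of a group element in the group algebra. -/
noncomputable def emb {G : Type*} [Group G] (g : G) : R2 G := MonoidAlgebra.single g 1

/-- The augmentation map: the sum of the coefficients. -/
def aug {G : Type*} [Group G] (x : R2 G) : ZMod 2 := Finsupp.sum x.coeff fun _ c => c

/-- The canonical embedding of `G` into the unit group of its group algebra. -/
noncomputable def iota (G : Type*) [Group G] : G →* (R2 G)ˣ :=
  (Units.map (MonoidAlgebra.of (ZMod 2) G)).comp toUnits.toMonoidHom

open Classical in
/-- The map `g ↦ g` for `g ∈ C = Z(G)` and `g ↦ ge` for `g ∉ C`. -/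
noncomputable def sigmaMap (G : Type*) [Group G] (e : G) : G → G :=
  fun g => if g ∈ Subgroup.center G then g else g * e

/-- The involution `⊙` of `ℤ₂G`: the linear extension of `g ↦ g` for `g ∈ C = Z(G)`
and `g ↦ ge` for `g ∉ C`. -/
noncomputable def odot {G : Type*} [Group G] (e : G) (x : R2 G) : R2 G :=
  MonoidAlgebra.ofCoeff (Finsupp.mapDomain (sigmaMap G e) x.coeff)

/-- The set of unitary normalized units: `V_⊙(ℤ₂G) = {u ∈ V(ℤ₂G) : u⊙ = u⁻¹}`. -/
noncomputable def VodotSet (G : Type*) [Group G] (e : G) : Set (R2 G)ˣ :=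
  {u | aug (u : R2 G) = 1 ∧ odot e (u : R2 G) = ((u⁻¹ : (R2 G)ˣ) : R2 G)}

/-- Membership in the ideal `(1 + e)ℤ₂C` of `ℤ₂C`, where `C = Z(G)`. -/
noncomputable def InIdC {G : Type*} [Group G] (e : G) (x : R2 G) : Prop :=
  ∃ u : R2 G, ↑u.coeff.support ⊆ (Subgroup.center G : Set G) ∧ x = (1 + emb e) * u

/-- The set `W = {1 + y₁a + y₂b + y₃ab : yᵢ ∈ (1 + e)ℤ₂C}` inside the unit group. -/
noncomputable def WsetB {G : Type*} [Group G] (e a b : G) : Set (R2 G)ˣ :=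
  {w | ∃ y₁ y₂ y₃ : R2 G, InIdC e y₁ ∧ InIdC e y₂ ∧ InIdC e y₃ ∧
    (w : R2 G) = 1 + y₁ * emb a + y₂ * emb b + y₃ * (emb a * emb b)}

/-- The set `V(ℤ₂C)[2]` of normalized units of `ℤ₂C` of order dividing 2, where `C = Z(G)`. -/
noncomputable def V2Set (G : Type*) [Group G] : Set (R2 G)ˣ :=
  {u | ↑(u : R2 G).coeff.support ⊆ (Subgroup.center G : Set G) ∧ aug (u : R2 G) = 1 ∧ u * u = 1}

/-! Since `G/C` is abelian, `G' ≤ C`, so `e` is central with `e² = 1`. The centraliser of a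
noncentral `g` contains `C`; if it also contained a noncentral `h` with `gh ∉ C`, the images of
`g`, `h`, `gh` would be the three nontrivial elements of the Klein four-group `G/C` and `g` would
be central. Hence noncentral `g, h` commute exactly when `gh ∈ C`, and otherwise `⁅h, g⁆ = e`,
i.e. `hg = ghe`; this is precisely the factor of `e` needed in `(gh)⊙ = h⊙g⊙`. -/

open Subgroup
open scoped commutatorElement

instance : IsKleinFour (Multiplicative (ZMod 2) × Multiplicative (ZMod 2)) where
  card_four := by simp
  exponent_two := by simp [Monoid.exponent_prod, Monoid.exponent_multiplicative, ZMod.exponent]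

lemma IsKleinFour.of_mulEquiv {G H : Type*} [Group G] [Group H] [IsKleinFour H] (φ : G ≃* H) :
    IsKleinFour G where
  card_four := (Nat.card_congr φ.toEquiv).trans IsKleinFour.card_four
  exponent_two := (Monoid.exponent_eq_of_mulEquiv φ).trans IsKleinFour.exponent_two

section

variable {G : Type*} [Group G]

lemma eq_one_or_eq_of_mem_zpowers {e x : G} (he : orderOf e = 2) (hx : x ∈ zpowers e) :
    x = 1 ∨ x = e := by
  classical
  have hfin : IsOfFinOrder e := orderOf_pos_iff.mp (by omega)
  obtain ⟨k, hk, rfl⟩ := Finset.mem_image.mp <|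
    (hfin.mem_zpowers_iff_mem_range_orderOf).mp hx
  rw [he, Finset.mem_range] at hk
  interval_cases k <;> simp

lemma mem_of_mk_eq_of_le {s t : Subgroup G} (hst : s ≤ t) {x y : G}
    (hxy : (x : G ⧸ s) = y) (hy : y ∈ t) : x ∈ t := by
  have hyx : y⁻¹ * x ∈ t := hst (QuotientGroup.eq.mp hxy.symm)
  simpa using mul_mem hy hyx

lemma commute_of_mul_mem_center {g h : G} (hgh : g * h ∈ center G) : Commute g h :=
  mul_left_cancel (((mem_center_iff.mp hgh) g).trans (mul_assoc g h g))

lemma mul_mem_center_of_commute [IsKleinFour (G ⧸ center G)] {g h : G}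
    (hg : g ∉ center G) (hh : h ∉ center G) (hgh : Commute g h) : g * h ∈ center G := by
  by_contra hgh_nc
  have mk_ne_one {x : G} (hx : x ∉ center G) : (x : G ⧸ center G) ≠ 1 :=
    mt (QuotientGroup.eq_one_iff x).mp hx
  have hg_ne_h : (g : G ⧸ center G) ≠ h := fun hgh_eq ↦
    mk_ne_one hgh_nc (by rw [QuotientGroup.mk_mul, ← hgh_eq, IsKleinFour.mul_self])
  have hg_cent : g ∈ centralizer {g} := mem_centralizer_singleton_iff.mpr rfl
  have hh_cent : h ∈ centralizer {g} := mem_centralizer_singleton_iff.mpr hgh.eq.symm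
  have hC : center G ≤ centralizer {g} := center_le_centralizer {g}
  refine hg (mem_center_iff.mpr fun x ↦ mem_centralizer_singleton_iff.mp ?_)
  by_cases hx1 : (x : G ⧸ center G) = 1
  · exact mem_of_mk_eq_of_le hC hx1 (one_mem _)
  by_cases hxg : (x : G ⧸ center G) = g
  · exact mem_of_mk_eq_of_le hC hxg hg_cent
  by_cases hxh : (x : G ⧸ center G) = h
  · exact mem_of_mk_eq_of_le hC hxh hh_cent
  have hx_gh : (x : G ⧸ center G) = ↑(g * h) :=
    IsKleinFour.eq_mul_of_ne_all (mk_ne_one hg) (mk_ne_one hh) hg_ne_h hx1 hxg hxh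
  exact mem_of_mk_eq_of_le hC hx_gh (mul_mem hg_cent hh_cent)

lemma commutator_le_center [IsKleinFour (G ⧸ center G)] : commutator G ≤ center G :=
  Normal.quotient_commutative_iff_commutator_le.mp IsKleinFour.isMulCommutative

lemma exists_notMem_center [Nontrivial (G ⧸ center G)] : ∃ g : G, g ∉ center G := by
  obtain ⟨q, hq⟩ := exists_ne (1 : G ⧸ center G)
  obtain ⟨g, rfl⟩ := QuotientGroup.mk_surjective q
  exact ⟨g, mt (QuotientGroup.eq_one_iff g).mpr hq⟩

lemma commutatorElement_eq_of_mul_notMem_center [IsKleinFour (G ⧸ center G)] {e g h : G}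
    (hcomm : commutator G = zpowers e) (he : orderOf e = 2)
    (hg : g ∉ center G) (hh : h ∉ center G) (hgh : g * h ∉ center G) : ⁅h, g⁆ = e := by
  have hmem : ⁅h, g⁆ ∈ zpowers e := hcomm ▸ commutator_mem_commutator (mem_top h) (mem_top g)
  refine (eq_one_or_eq_of_mem_zpowers he hmem).resolve_left fun hcomm_hg ↦ hgh ?_
  exact mul_mem_center_of_commute hg hh (commutatorElement_eq_one_iff_mul_comm.mp hcomm_hg).symm

variable {e : G}

lemma sigmaMap_of_mem {g : G} (hg : g ∈ center G) : sigmaMap G e g = g := if_pos hg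

lemma sigmaMap_of_notMem {g : G} (hg : g ∉ center G) : sigmaMap G e g = g * e := if_neg hg

lemma sigmaMap_sigmaMap (he : e ∈ center G) (he2 : e * e = 1) (g : G) :
    sigmaMap G e (sigmaMap G e g) = g := by
  by_cases hg : g ∈ center G
  · rw [sigmaMap_of_mem hg, sigmaMap_of_mem hg]
  · have hge : g * e ∉ center G := (mul_mem_cancel_right he).not.mpr hg
    rw [sigmaMap_of_notMem hg, sigmaMap_of_notMem hge, mul_assoc, he2, mul_one]

lemma sigmaMap_mul (he : e ∈ center G) (he2 : e * e = 1)
    (hswap : ∀ g h : G, g ∉ center G → h ∉ center G → g * h ∉ center G → ⁅h, g⁆ = e)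
    (g h : G) : sigmaMap G e (g * h) = sigmaMap G e h * sigmaMap G e g := by
  by_cases hg : g ∈ center G
  · by_cases hh : h ∈ center G
    · rw [sigmaMap_of_mem (mul_mem hg hh), sigmaMap_of_mem hg, sigmaMap_of_mem hh]
      exact (mem_center_iff.mp hg h).symm
    · rw [sigmaMap_of_notMem ((mul_mem_cancel_left hg).not.mpr hh), sigmaMap_of_mem hg,
        sigmaMap_of_notMem hh, mul_assoc, mem_center_iff.mp hg]
  by_cases hh : h ∈ center G
  · rw [sigmaMap_of_notMem ((mul_mem_cancel_right hh).not.mpr hg), sigmaMap_of_mem hh,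
      sigmaMap_of_notMem hg, mem_center_iff.mp hh g, mul_assoc]
  have hprod : sigmaMap G e h * sigmaMap G e g = h * g := by
    rw [sigmaMap_of_notMem hg, sigmaMap_of_notMem hh, mem_center_iff.mp he g, mul_assoc,
      ← mul_assoc e e g, he2, one_mul]
  rw [hprod]
  by_cases hgh : g * h ∈ center G
  · rw [sigmaMap_of_mem hgh]
    exact (commute_of_mul_mem_center hgh).eq
  · have hhg : h * g = ⁅h, g⁆ * (g * h) := by rw [commutatorElement_def]; group
    rw [sigmaMap_of_notMem hgh, hhg, hswap g h hg hh hgh, mem_center_iff.mp he]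

end

theorem stmt_12_general {G : Type*} [Group G]
    (e : G) (hcomm : commutator G = Subgroup.zpowers e) (he : orderOf e = 2)
    (hquot : Nonempty ((G ⧸ Subgroup.center G) ≃*
      (Multiplicative (ZMod 2) × Multiplicative (ZMod 2)))) :
    (∀ g h : G, sigmaMap G e (g * h) = sigmaMap G e h * sigmaMap G e g) ∧
    (∀ g : G, sigmaMap G e (sigmaMap G e g) = g) ∧
    (∃ g : G, sigmaMap G e g ≠ g) := by
  obtain ⟨iso⟩ := hquot
  have := IsKleinFour.of_mulEquiv iso
  have := iso.toEquiv.nontrivial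
  have he_center : e ∈ center G := commutator_le_center (hcomm ▸ mem_zpowers e)
  have he2 : e * e = 1 := by rw [← sq, ← he, pow_orderOf_eq_one]
  have he1 : e ≠ 1 := by rintro rfl; simp at he
  obtain ⟨g, hg⟩ := exists_notMem_center (G := G)
  refine ⟨sigmaMap_mul he_center he2 fun g h ↦ commutatorElement_eq_of_mul_notMem_center hcomm he,
    sigmaMap_sigmaMap he_center he2, g, ?_⟩
  rw [sigmaMap_of_notMem hg]
  exact mul_eq_left.not.mpr he1

/-- Let `G` be a finite 2-group with center `C` such that `G/C ≅ C₂ × C₂` and the commutator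
subgroup `G' = ⟨e⟩` has order two. Then `g ↦ g` for `g ∈ C`, `g ↦ ge` for `g ∉ C` is an
anti-automorphism of `G` of order two. -/
theorem stmt_12 {G : Type*} [Group G] [Fintype G] (hG : IsPGroup 2 G)
    (e : G) (hcomm : commutator G = Subgroup.zpowers e) (he : orderOf e = 2)
    (hquot : Nonempty ((G ⧸ Subgroup.center G) ≃*
      (Multiplicative (ZMod 2) × Multiplicative (ZMod 2)))) :
    (∀ g h : G, sigmaMap G e (g * h) = sigmaMap G e h * sigmaMap G e g) ∧
    (∀ g : G, sigmaMap G e (sigmaMap G e g) = g) ∧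
    (∃ g : G, sigmaMap G e g ≠ g) :=
  stmt_12_general e hcomm he hquot
end

section
/- Let G be a finite 2-group with center C such that G/C = ⟨aC⟩ × ⟨bC⟩ is a direct product of two groups of order two and the commutator subgroup G' = ⟨e⟩ has order two. Let x = x₀ + x₁a + x₂b + x₃ab with x₀, x₁, x₂, x₃ ∈ ℤ₂C. Then xx⊙ = 1 holds if and only if the following four equations hold in ℤ₂C: x₀² + x₁²a²e + x₂²b²e + x₃²a²b² = 1, (x₀x₁ + x₂x₃b²)(1 + e) = 0, (x₀x₂ + x₁x₃a²)(1 + e) = 0, and (x₀x₃ + x₁x₂)(1 + e) = 0. -/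
section TransversalComb
variable {Z R : Type*} [CommRing Z] [Ring R] [Module Z R]

def transversalComb (A B : R) (x₀ x₁ x₂ x₃ : Z) : R :=
  x₀ • 1 + x₁ • A + x₂ • B + x₃ • (A * B)

-- The second factor is the image of the first under `⊙` (see `odot_transversalComb`).
theorem transversalComb_mul_twist [IsScalarTower Z R R] [SMulCommClass Z R R] {A B : R}
    {α β ε : Z} (hA : A * A = α • 1) (hB : B * B = β • 1) (hBA : B * A = ε • (A * B))
    (hε : ε * ε = 1) (x₀ x₁ x₂ x₃ : Z) :
    transversalComb A B x₀ x₁ x₂ x₃ * transversalComb A B x₀ (x₁ * ε) (x₂ * ε) (x₃ * ε) =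
      transversalComb A B (x₀ * x₀ + x₁ * x₁ * α * ε + x₂ * x₂ * β * ε + x₃ * x₃ * α * β)
        ((x₀ * x₁ + x₂ * x₃ * β) * (1 + ε)) ((x₀ * x₂ + x₁ * x₃ * α) * (1 + ε))
        ((x₀ * x₃ + x₁ * x₂) * (1 + ε)) := by
  have hAAB : A * (A * B) = α • B := by rw [← mul_assoc, hA, smul_mul_assoc, one_mul]
  have hABA : A * B * A = (ε * α) • B := by
    rw [mul_assoc, hBA, mul_smul_comm, ← mul_assoc, hA, smul_mul_assoc, one_mul, smul_smul]
  have hABB : A * B * B = β • A := by rw [mul_assoc, hB, mul_smul_comm, mul_one]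
  have hBAB : B * (A * B) = (ε * β) • A := by
    rw [← mul_assoc, hBA, smul_mul_assoc, hABB, smul_smul]
  have hABAB : A * B * (A * B) = (ε * α * β) • 1 := by
    rw [← mul_assoc, hABA, smul_mul_assoc, hB, smul_smul]
  simp only [transversalComb, mul_add, add_mul, smul_mul_smul_comm, one_mul, mul_one, hA, hB,
    hBA, hAAB, hABA, hABB, hBAB, hABAB]
  linear_combination (norm := module) (x₃ * x₃ * α * β * hε) • (1 : R) +
    (x₂ * x₃ * β * hε) • A + (x₁ * x₃ * α * hε) • B + (x₁ * x₂ * hε) • (A * B)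

theorem transversalComb_eq_iff {A B : R} (h : LinearIndependent Z ![1, A, B, A * B])
    {x₀ x₁ x₂ x₃ y₀ y₁ y₂ y₃ : Z} :
    transversalComb A B x₀ x₁ x₂ x₃ = transversalComb A B y₀ y₁ y₂ y₃ ↔
      x₀ = y₀ ∧ x₁ = y₁ ∧ x₂ = y₂ ∧ x₃ = y₃ := by
  refine ⟨fun hxy => ?_, by rintro ⟨rfl, rfl, rfl, rfl⟩; rfl⟩
  have := Fintype.linearIndependent_iff.mp h ![x₀ - y₀, x₁ - y₁, x₂ - y₂, x₃ - y₃] (by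
    simp only [transversalComb] at hxy
    simp only [Fin.sum_univ_four, Fin.isValue, Matrix.cons_val]
    linear_combination (norm := module) hxy)
  simpa [sub_eq_zero, Fin.forall_fin_succ] using this

theorem transversalComb_eq_one_iff {A B : R} (h : LinearIndependent Z ![1, A, B, A * B])
    {x₀ x₁ x₂ x₃ : Z} :
    transversalComb A B x₀ x₁ x₂ x₃ = 1 ↔ x₀ = 1 ∧ x₁ = 0 ∧ x₂ = 0 ∧ x₃ = 0 := by
  have h1 : transversalComb A B (1 : Z) 0 0 0 = 1 := by simp [transversalComb]
  rw [← transversalComb_eq_iff h, h1]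

end TransversalComb

section GroupTheory
variable {G : Type*} [Group G]
open Subgroup
open scoped commutatorElement

theorem commute_of_sup_zpowers_eq_top {A B : G} (hAB : Commute A B)
    (h : zpowers A ⊔ zpowers B = ⊤) (p q : G) : Commute p q := by
  have hcl : closure {A, B} = ⊤ := by
    rw [← h, zpowers_eq_closure, zpowers_eq_closure, ← Subgroup.closure_union,
      Set.singleton_union]
  have : IsMulCommutative (closure {A, B}) := isMulCommutative_closure (by
    rintro x (rfl | rfl) y (rfl | rfl)
    exacts [rfl, hAB.eq, hAB.symm.eq, rfl])
  exact setLike_mul_comm (s := closure {A, B}) (hcl ▸ mem_top p) (hcl ▸ mem_top q)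

theorem commutator_le_center_of_sup_zpowers_eq_top {a b : G}
    (hab : Commute (a : G ⧸ center G) b)
    (hsup : zpowers (a : G ⧸ center G) ⊔ zpowers (b : G ⧸ center G) = ⊤) :
    commutator G ≤ center G :=
  Normal.quotient_commutative_iff_commutator_le.mp
    ⟨⟨fun p q => (commute_of_sup_zpowers_eq_top hab hsup p q).eq⟩⟩

theorem mem_center_of_commute {a b : G} (hab : Commute a b)
    (hsup : zpowers (a : G ⧸ center G) ⊔ zpowers (b : G ⧸ center G) = ⊤) : a ∈ center G := by
  have hCH : center G ≤ centralizer {a} := fun z hz =>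
    mem_centralizer_singleton_iff.mpr (mem_center_iff.mp hz a).symm
  have hmap : (centralizer {a}).map (QuotientGroup.mk' (center G)) = ⊤ := by
    rw [eq_top_iff, ← hsup]
    exact sup_le (zpowers_le.mpr ⟨a, mem_centralizer_singleton_iff.mpr rfl, rfl⟩)
      (zpowers_le.mpr ⟨b, mem_centralizer_singleton_iff.mpr hab.eq.symm, rfl⟩)
  have htop : centralizer {a} = ⊤ := by
    simpa [hmap, hCH] using (QuotientGroup.comap_map_mk' (center G) (centralizer {a})).symm
  exact mem_center_iff.mpr fun g => mem_centralizer_singleton_iff.mp (htop.symm ▸ mem_top g)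

theorem commutatorElement_eq_of_not_commute {e x y : G} (hcomm : commutator G = zpowers e)
    (he : orderOf e = 2) (hxy : ¬Commute x y) : ⁅x, y⁆ = e := by
  classical
  have hmem : ⁅x, y⁆ ∈ zpowers e := hcomm ▸ commutator_mem_commutator (mem_top x) (mem_top y)
  rw [(orderOf_pos_iff.mp (he ▸ two_pos)).mem_zpowers_iff_mem_range_orderOf, he] at hmem
  simp only [Finset.range_add_one, Finset.range_zero, insert_empty_eq, Finset.image_insert,
    pow_one, Finset.image_singleton, pow_zero, Finset.mem_insert, Finset.mem_singleton] at hmem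
  exact hmem.resolve_right (mt commutatorElement_eq_one_iff_commute.mp hxy)

theorem mul_eq_mul_mul_of_commutator_eq_zpowers {e a b : G}
    (hcomm : commutator G = zpowers e) (he : orderOf e = 2) (ha : a ∉ center G)
    (hsup : zpowers (a : G ⧸ center G) ⊔ zpowers (b : G ⧸ center G) = ⊤) :
    b * a = e * (a * b) := by
  rw [← commutatorElement_eq_of_not_commute hcomm he fun h =>
    ha (mem_center_of_commute h.symm hsup), commutatorElement_def]
  group

theorem mul_self_mem_of_orderOf_mk_eq_two {N : Subgroup G} [N.Normal] {g : G}
    (hg : orderOf (g : G ⧸ N) = 2) : g * g ∈ N :=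
  (QuotientGroup.eq_one_iff _).mp (by rw [QuotientGroup.mk_mul, ← sq, ← hg, pow_orderOf_eq_one])

theorem injective_vecCons_one_mul {A B : G} (hA : A ≠ 1) (hB : B ≠ 1)
    (hinf : zpowers A ⊓ zpowers B = ⊥) : Function.Injective ![1, A, B, A * B] := by
  have hA' : A ∉ zpowers B := fun h => by
    have hmem : A ∈ zpowers A ⊓ zpowers B := ⟨mem_zpowers A, h⟩
    rw [hinf, mem_bot] at hmem
    exact hA hmem
  have h1 : A ≠ B := fun h => hA' (h ▸ mem_zpowers B)
  have h2 : A * B ≠ 1 := fun h => hA' (eq_inv_of_mul_eq_one_left h ▸ inv_mem (mem_zpowers B))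
  intro i j hij
  fin_cases i <;> fin_cases j <;> simp_all [eq_comm]

end GroupTheory

section CenterSupported
open MonoidAlgebra
variable (k G : Type*) [CommRing k] [Group G]

def centerSupported : Subalgebra k (MonoidAlgebra k G) where
  carrier := {x | ↑x.coeff.support ⊆ (Subgroup.center G : Set G)}
  mul_mem' {x y} hx hy := by
    classical
    intro g hg
    obtain ⟨p, hp, q, hq, rfl⟩ := Finset.mem_mul.mp (support_coeff_mul_subset x y hg)
    exact mul_mem (hx hp) (hy hq)
  add_mem' {x y} hx hy := by
    classical
    intro g hg
    rcases Finset.mem_union.mp (Finsupp.support_add hg) with h | h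
    exacts [hx h, hy h]
  algebraMap_mem' r g hg :=
    (Finset.mem_singleton.mp (Finsupp.support_single_subset hg)) ▸ one_mem _

variable {k G}

theorem single_mem_centerSupported {z : G} (hz : z ∈ Subgroup.center G) (r : k) :
    single z r ∈ centerSupported k G := fun _ hg =>
  (Finset.mem_singleton.mp (Finsupp.support_single_subset hg)) ▸ hz

theorem commute_of_mem_centerSupported {x : MonoidAlgebra k G} (hx : x ∈ centerSupported k G)
    (y : MonoidAlgebra k G) : Commute x y := by
  rw [← sum_coeff_single x]
  exact Commute.sum_left _ _ _ fun z hz =>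
    single_commute (fun g => (Subgroup.mem_center_iff.mp (hx hz) g).symm) (Commute.all _) y

noncomputable instance : CommRing (centerSupported k G) :=
  { (centerSupported k G).toRing with
    mul_comm := fun x y => Subtype.ext (commute_of_mem_centerSupported x.2 y).eq }

instance : SMulCommClass (centerSupported k G) (MonoidAlgebra k G) (MonoidAlgebra k G) :=
  ⟨fun s x y => (commute_of_mem_centerSupported s.2 x).left_comm y⟩

theorem linearIndependent_single_of_injective_mk {ι : Type*} {g : ι → G}
    (hg : Function.Injective fun i => (g i : G ⧸ Subgroup.center G)) :
    LinearIndependent (centerSupported k G) fun i => single (g i) (1 : k) := by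
  classical
  rw [linearIndependent_iff']
  intro s c hsum i hi
  ext1
  ext z
  by_cases hz : z ∈ Subgroup.center G
  · have := congr_arg (fun x : MonoidAlgebra k G => x.coeff (z * g i)) hsum
    simp only [coeff_sum, Finsupp.finsetSum_apply, Subalgebra.smul_def, smul_eq_mul,
      coeff_mul_single_apply, mul_one] at this
    rw [Finset.sum_eq_single i] at this
    · simpa using this
    · intro j _ hji
      refine Finsupp.notMem_support_iff.mp fun hmem => hji (hg ?_)
      rw [QuotientGroup.eq_iff_div_mem]
      have := (Subgroup.mul_mem_cancel_left _ hz).mp (mul_assoc z _ _ ▸ (c j).2 hmem)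
      simpa [div_eq_mul_inv] using inv_mem this
    · exact fun h => absurd hi h
  · simpa using Finsupp.notMem_support_iff.mp fun h => hz ((c i).2 h)

end CenterSupported

section Involution
open MonoidAlgebra
variable {G : Type*} [Group G]

theorem emb_one : emb (1 : G) = 1 := rfl

theorem emb_mul (g h : G) : emb g * emb h = emb (g * h) := single_mul_single ..

theorem emb_mem_centerSupported {z : G} (hz : z ∈ Subgroup.center G) :
    emb z ∈ centerSupported (ZMod 2) G :=
  single_mem_centerSupported hz 1

theorem linearIndependent_one_emb {a b : G}
    (h : Function.Injective ![1, (a : G ⧸ Subgroup.center G), b, a * b]) :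
    LinearIndependent (centerSupported (ZMod 2) G) ![1, emb a, emb b, emb a * emb b] := by
  convert linearIndependent_single_of_injective_mk (g := ![1, a, b, a * b]) ?_ using 1
  · funext i
    fin_cases i
    exacts [rfl, rfl, rfl, emb_mul a b]
  · convert h using 1
    funext i
    fin_cases i <;> rfl

theorem sigmaMap_mul_of_mem_center {e z : G} (hz : z ∈ Subgroup.center G) (g : G) :
    sigmaMap G e (z * g) = z * sigmaMap G e g := by
  by_cases hg : g ∈ Subgroup.center G
  · simp [sigmaMap, hg, mul_mem hz hg]
  · have hzg : z * g ∉ Subgroup.center G := fun h =>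
      hg ((Subgroup.mul_mem_cancel_left _ hz).mp h)
    simp [sigmaMap, hg, hzg, mul_assoc]

theorem smul_emb_eq_mapDomain (x : centerSupported (ZMod 2) G) (g : G) :
    x • emb g = ofCoeff (Finsupp.mapDomain (· * g) (x : R2 G).coeff) := by
  ext h
  rw [Subalgebra.smul_def, smul_eq_mul, emb, coeff_mul_single_apply, coeff_ofCoeff,
    show (· * g) = ⇑(Equiv.mulRight g) from rfl, Finsupp.mapDomain_equiv_apply]
  simp

theorem odot_smul_emb (e : G) (x : centerSupported (ZMod 2) G) (g : G) :
    odot e (x • emb g) = x • emb (sigmaMap G e g) := by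
  rw [smul_emb_eq_mapDomain, smul_emb_eq_mapDomain, odot, coeff_ofCoeff,
    ← Finsupp.mapDomain_comp]
  exact congr_arg ofCoeff
    (Finsupp.mapDomain_congr fun z hz => sigmaMap_mul_of_mem_center (x.2 hz) g)

theorem odot_add (e : G) (x y : R2 G) : odot e (x + y) = odot e x + odot e y :=
  congr_arg ofCoeff Finsupp.mapDomain_add

theorem odot_transversalComb {e a b : G} (he : e ∈ Subgroup.center G)
    (ha : a ∉ Subgroup.center G) (hb : b ∉ Subgroup.center G)
    (hab : a * b ∉ Subgroup.center G) {ε : centerSupported (ZMod 2) G}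
    (hε : (ε : R2 G) = emb e) (x₀ x₁ x₂ x₃ : centerSupported (ZMod 2) G) :
    odot e (transversalComb (emb a) (emb b) x₀ x₁ x₂ x₃) =
      transversalComb (emb a) (emb b) x₀ (x₁ * ε) (x₂ * ε) (x₃ * ε) := by
  have hσ : ∀ g ∉ Subgroup.center G, ∀ x : centerSupported (ZMod 2) G,
      x • emb (sigmaMap G e g) = (x * ε) • emb g := fun g hg x => by
    rw [sigmaMap, if_neg hg, ← emb_mul, mul_smul, Subalgebra.smul_def ε, hε, smul_eq_mul,
      (commute_of_mem_centerSupported (emb_mem_centerSupported he) (emb g)).eq]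
  have h1 : sigmaMap G e 1 = 1 := if_pos (one_mem _)
  simp only [transversalComb, emb_mul]
  rw [← emb_one, odot_add, odot_add, odot_add, odot_smul_emb, odot_smul_emb, odot_smul_emb,
    odot_smul_emb, h1, hσ a ha, hσ b hb, hσ _ hab]

end Involution

theorem stmt_15_general
 {G : Type*} [Group G]
    (e : G) (hcomm : commutator G = Subgroup.zpowers e) (he : orderOf e = 2)
    (a b : G)
    (ha : orderOf ((a : G ⧸ Subgroup.center G)) = 2)
    (hb : orderOf ((b : G ⧸ Subgroup.center G)) = 2)
    (hab : ((a : G ⧸ Subgroup.center G)) * b = (b : G ⧸ Subgroup.center G) * a)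
    (hinf : Subgroup.zpowers ((a : G ⧸ Subgroup.center G)) ⊓
      Subgroup.zpowers ((b : G ⧸ Subgroup.center G)) = ⊥)
    (hsup : Subgroup.zpowers ((a : G ⧸ Subgroup.center G)) ⊔
      Subgroup.zpowers ((b : G ⧸ Subgroup.center G)) = ⊤)
    :
    ∀ x₀ x₁ x₂ x₃ : R2 G,
      ↑x₀.coeff.support ⊆ (Subgroup.center G : Set G) →
      ↑x₁.coeff.support ⊆ (Subgroup.center G : Set G) →
      ↑x₂.coeff.support ⊆ (Subgroup.center G : Set G) →
      ↑x₃.coeff.support ⊆ (Subgroup.center G : Set G) →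
      ((x₀ + x₁ * emb a + x₂ * emb b + x₃ * (emb a * emb b)) *
          odot e (x₀ + x₁ * emb a + x₂ * emb b + x₃ * (emb a * emb b)) = 1 ↔
        (x₀ * x₀ + x₁ * x₁ * (emb a * emb a) * emb e + x₂ * x₂ * (emb b * emb b) * emb e +
            x₃ * x₃ * (emb a * emb a) * (emb b * emb b) = 1 ∧
          (x₀ * x₁ + x₂ * x₃ * (emb b * emb b)) * (1 + emb e) = 0 ∧
          (x₀ * x₂ + x₁ * x₃ * (emb a * emb a)) * (1 + emb e) = 0 ∧
          (x₀ * x₃ + x₁ * x₂) * (1 + emb e) = 0)) := by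
  intro x₀ x₁ x₂ x₃ hx₀ hx₁ hx₂ hx₃
  have hA : (a : G ⧸ Subgroup.center G) ≠ 1 := fun h => by simp [h] at ha
  have hB : (b : G ⧸ Subgroup.center G) ≠ 1 := fun h => by simp [h] at hb
  have hinj := injective_vecCons_one_mul hA hB hinf
  have hC : ∀ g : G, (g : G ⧸ Subgroup.center G) ≠ 1 → g ∉ Subgroup.center G :=
    fun g hg h => hg ((QuotientGroup.eq_one_iff g).mpr h)
  have heC : e ∈ Subgroup.center G :=
    commutator_le_center_of_sup_zpowers_eq_top hab hsup (hcomm ▸ Subgroup.mem_zpowers e)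
  have hba := mul_eq_mul_mul_of_commutator_eq_zpowers hcomm he (hC a hA) hsup
  have he2 : e * e = 1 := by rw [← sq, ← he, pow_orderOf_eq_one]
  let S := centerSupported (ZMod 2) G
  obtain ⟨α, hα⟩ : ∃ α : S, (α : R2 G) = emb a * emb a :=
    ⟨⟨_, emb_mul a a ▸ emb_mem_centerSupported (mul_self_mem_of_orderOf_mk_eq_two ha)⟩, rfl⟩
  obtain ⟨β, hβ⟩ : ∃ β : S, (β : R2 G) = emb b * emb b :=
    ⟨⟨_, emb_mul b b ▸ emb_mem_centerSupported (mul_self_mem_of_orderOf_mk_eq_two hb)⟩, rfl⟩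
  obtain ⟨ε, hε⟩ : ∃ ε : S, (ε : R2 G) = emb e := ⟨⟨_, emb_mem_centerSupported heC⟩, rfl⟩
  have hx : x₀ + x₁ * emb a + x₂ * emb b + x₃ * (emb a * emb b) =
      transversalComb (emb a) (emb b) (⟨x₀, hx₀⟩ : S) ⟨x₁, hx₁⟩ ⟨x₂, hx₂⟩ ⟨x₃, hx₃⟩ := by
    simp [transversalComb, Subalgebra.smul_def]
  have hprod := transversalComb_mul_twist (A := emb a) (B := emb b) (α := α) (β := β) (ε := ε)
    (by simp [Subalgebra.smul_def, hα]) (by simp [Subalgebra.smul_def, hβ])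
    (by simp [Subalgebra.smul_def, hε, emb_mul, hba])
    (Subtype.ext (by simp [hε, emb_mul, he2, emb_one]))
  have hlin := linearIndependent_one_emb hinj
  rw [hx, odot_transversalComb heC (hC a hA) (hC b hB)
    (hC _ (hinj.ne (show (3 : Fin 4) ≠ 0 by decide))) hε, hprod, transversalComb_eq_one_iff hlin]
  simp only [← Subtype.coe_inj, Subalgebra.coe_add, Subalgebra.coe_mul, Subalgebra.coe_one,
    Subalgebra.coe_zero, hα, hβ, hε]

/-- For `x = x₀ + x₁a + x₂b + x₃ab` with `x₀, x₁, x₂, x₃ ∈ ℤ₂C`, one has `xx⊙ = 1` if and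
only if `x₀² + x₁²a²e + x₂²b²e + x₃²a²b² = 1`, `(x₀x₁ + x₂x₃b²)(1 + e) = 0`,
`(x₀x₂ + x₁x₃a²)(1 + e) = 0` and `(x₀x₃ + x₁x₂)(1 + e) = 0`. -/
theorem stmt_15
 {G : Type*} [Group G] [Fintype G] (hG : IsPGroup 2 G)
    (e : G) (hcomm : commutator G = Subgroup.zpowers e) (he : orderOf e = 2)
    (a b : G)
    (ha : orderOf ((a : G ⧸ Subgroup.center G)) = 2)
    (hb : orderOf ((b : G ⧸ Subgroup.center G)) = 2)
    (hab : ((a : G ⧸ Subgroup.center G)) * b = (b : G ⧸ Subgroup.center G) * a)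
    (hinf : Subgroup.zpowers ((a : G ⧸ Subgroup.center G)) ⊓
      Subgroup.zpowers ((b : G ⧸ Subgroup.center G)) = ⊥)
    (hsup : Subgroup.zpowers ((a : G ⧸ Subgroup.center G)) ⊔
      Subgroup.zpowers ((b : G ⧸ Subgroup.center G)) = ⊤)
    :
    ∀ x₀ x₁ x₂ x₃ : R2 G,
      ↑x₀.coeff.support ⊆ (Subgroup.center G : Set G) →
      ↑x₁.coeff.support ⊆ (Subgroup.center G : Set G) →
      ↑x₂.coeff.support ⊆ (Subgroup.center G : Set G) →
      ↑x₃.coeff.support ⊆ (Subgroup.center G : Set G) →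
      ((x₀ + x₁ * emb a + x₂ * emb b + x₃ * (emb a * emb b)) *
          odot e (x₀ + x₁ * emb a + x₂ * emb b + x₃ * (emb a * emb b)) = 1 ↔
        (x₀ * x₀ + x₁ * x₁ * (emb a * emb a) * emb e + x₂ * x₂ * (emb b * emb b) * emb e +
            x₃ * x₃ * (emb a * emb a) * (emb b * emb b) = 1 ∧
          (x₀ * x₁ + x₂ * x₃ * (emb b * emb b)) * (1 + emb e) = 0 ∧
          (x₀ * x₂ + x₁ * x₃ * (emb a * emb a)) * (1 + emb e) = 0 ∧
          (x₀ * x₃ + x₁ * x₂) * (1 + emb e) = 0)) :=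
  stmt_15_general e hcomm he a b ha hb hab hinf hsup
end
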